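/- Let A be a Codazzi tensor on M^n, n ≥ 3, with exactly two distinct eigenvalue functions μ and λ, dim V_μ = 1, and let X ∈ V_μ be a unit vector field. Then for all Y, Z ∈ V_λ one has g(∇_Z X, Y) = g(∇_Y X, Z); i.e., the (0,2)-tensor ∇X is symmetric when restricted to V_λ × V_λ, regardless of any trace condition on A. -/

import Mathlib

/-- Abstract axiomatization of the space of smooth vector fields `VF` on a
Riemannian manifold with point set `M`: a module over the ring of functions
`M → ℝ`, together with the metric `g`, the Levi-Civita connection `nabla`,
the directional derivative `D`, the gradient `grad` and the Lie bracket,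
satisfying the usual laws. -/
structure RiemannianSetup (M : Type*) (VF : Type*) [AddCommGroup VF]
    [Module (M → ℝ) VF] where
  g : VF → VF → M → ℝ
  nabla : VF → VF → VF
  D : VF → (M → ℝ) → M → ℝ
  grad : (M → ℝ) → VF
  bracket : VF → VF → VF
  g_symm : ∀ X Y, g X Y = g Y X
  g_addLeft : ∀ X Y Z, g (X + Y) Z = g X Z + g Y Z
  g_smulLeft : ∀ (f : M → ℝ) (X Y : VF), g (f • X) Y = f * g X Y
  g_nondeg : ∀ X Y : VF, (∀ Z, g X Z = g Y Z) → X = Y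
  nabla_addRight : ∀ X Y Z, nabla X (Y + Z) = nabla X Y + nabla X Z
  nabla_addLeft : ∀ X Y Z, nabla (X + Y) Z = nabla X Z + nabla Y Z
  nabla_smulLeft : ∀ (f : M → ℝ) (X Y : VF), nabla (f • X) Y = f • nabla X Y
  nabla_leibniz : ∀ (X : VF) (f : M → ℝ) (Y : VF),
    nabla X (f • Y) = D X f • Y + f • nabla X Y
  D_add : ∀ X (f₁ f₂ : M → ℝ), D X (f₁ + f₂) = D X f₁ + D X f₂
  D_mul : ∀ X (f₁ f₂ : M → ℝ), D X (f₁ * f₂) = D X f₁ * f₂ + f₁ * D X f₂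
  D_const : ∀ X (r : ℝ), D X (fun _ => r) = 0
  D_addLeft : ∀ X Y (f : M → ℝ), D (X + Y) f = D X f + D Y f
  D_smulLeft : ∀ (h : M → ℝ) X (f : M → ℝ), D (h • X) f = h * D X f
  compat : ∀ X Y Z, D X (g Y Z) = g (nabla X Y) Z + g Y (nabla X Z)
  torsion_free : ∀ X Y, bracket X Y = nabla X Y - nabla Y X
  grad_spec : ∀ (f : M → ℝ) (Z : VF), g (grad f) Z = D Z f

namespace RiemannianSetup

variable {M VF : Type*} [AddCommGroup VF] [Module (M → ℝ) VF]

/-- Covariant derivative `(∇_X A) Y` of a `(1,1)`-tensor `A`. -/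
def covDeriv (S : RiemannianSetup M VF) (A : VF → VF) (X Y : VF) : VF :=
  S.nabla X (A Y) - A (S.nabla X Y)

/-- A Codazzi tensor: a self-adjoint `(1,1)`-tensor with
`(∇_X A) Y = (∇_Y A) X` for all vector fields `X`, `Y`. -/
def IsCodazzi (S : RiemannianSetup M VF) (A : VF → VF) : Prop :=
  (∀ X Y, S.g (A X) Y = S.g X (A Y)) ∧
  (∀ X Y, S.covDeriv A X Y = S.covDeriv A Y X)

end RiemannianSetup

/-!
On `V_λ` the metric identity `g(∇_Y X, Z) = -g(X, ∇_Y Z)` holds because `X ⊥ V_λ`, so the claim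
is that `g(∇_Y Z - ∇_Z Y, X) = 0`. Pairing the Codazzi equation `(∇_Y A) Z = (∇_Z A) Y` with `X`
gives `(λ - μ) g(∇_Y Z, X) = (λ - μ) g(∇_Z Y, X)`, and `λ - μ` vanishes nowhere.
-/

namespace RiemannianSetup

variable {M VF : Type*} [AddCommGroup VF] [Module (M → ℝ) VF] (S : RiemannianSetup M VF)

theorem g_sub_left (X Y Z : VF) : S.g (X - Y) Z = S.g X Z - S.g Y Z := by
  rw [eq_sub_iff_add_eq, ← S.g_addLeft, sub_add_cancel]

theorem D_zero (X : VF) : S.D X 0 = 0 :=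
  S.D_const X 0

theorem g_nabla_left_eq_neg (X Y Z : VF) (hXZ : S.g X Z = 0) :
    S.g (S.nabla Y X) Z = -S.g X (S.nabla Y Z) := by
  have h := S.compat Y X Z
  rw [hXZ, D_zero] at h
  exact eq_neg_of_add_eq_zero_left h.symm

variable {S} {A : VF → VF} {mu lam : M → ℝ} {X : VF}

theorem g_eq_zero_of_eigen_ne (hsa : ∀ X Y, S.g (A X) Y = S.g X (A Y))
    (hdist : ∀ p, mu p ≠ lam p) (hX : A X = mu • X) {W : VF} (hW : A W = lam • W) :
    S.g W X = 0 := by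
  have h := hsa X W
  rw [hX, hW, S.g_smulLeft, S.g_symm X (lam • W), S.g_smulLeft, S.g_symm X W] at h
  funext p
  have hp := congrFun h p
  exact (mul_eq_mul_right_iff.mp hp).resolve_left (hdist p)

theorem g_covDeriv_eigen (hsa : ∀ X Y, S.g (A X) Y = S.g X (A Y)) (hX : A X = mu • X)
    {Y Z : VF} (hZ : A Z = lam • Z) (hZX : S.g Z X = 0) :
    S.g (S.covDeriv A Y Z) X = (lam - mu) * S.g (S.nabla Y Z) X := by
  have hAX : S.g (A (S.nabla Y Z)) X = mu * S.g (S.nabla Y Z) X := by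
    rw [hsa, hX, S.g_symm, S.g_smulLeft, S.g_symm]
  rw [covDeriv, hZ, S.nabla_leibniz, g_sub_left, S.g_addLeft, S.g_smulLeft, S.g_smulLeft,
    hZX, hAX]
  ring

theorem IsCodazzi.g_nabla_comm (hA : S.IsCodazzi A) (hdist : ∀ p, mu p ≠ lam p)
    (hX : A X = mu • X) {Y Z : VF} (hY : A Y = lam • Y) (hZ : A Z = lam • Z) :
    S.g (S.nabla Y Z) X = S.g (S.nabla Z Y) X := by
  obtain ⟨hsa, hcod⟩ := hA
  have h : S.g (S.covDeriv A Y Z) X = S.g (S.covDeriv A Z Y) X := by rw [hcod]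
  rw [g_covDeriv_eigen hsa hX hZ (g_eq_zero_of_eigen_ne hsa hdist hX hZ),
    g_covDeriv_eigen hsa hX hY (g_eq_zero_of_eigen_ne hsa hdist hX hY)] at h
  funext p
  exact mul_left_cancel₀ (sub_ne_zero.mpr (hdist p).symm) (congrFun h p)

end RiemannianSetup

theorem codazzi_nablaX_symm_on_Vlam_general
    {M VF : Type*} [AddCommGroup VF] [Module (M → ℝ) VF]
    (S : RiemannianSetup M VF) (A : VF → VF) (hA : S.IsCodazzi A)
    (mu lam : M → ℝ) (hdist : ∀ p, mu p ≠ lam p)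
    (X : VF) (hX : A X = mu • X) :
    ∀ Y Z : VF, A Y = lam • Y → A Z = lam • Z →
      S.g (S.nabla Z X) Y = S.g (S.nabla Y X) Z := by
  intro Y Z hY hZ
  have horth {W : VF} (hW : A W = lam • W) : S.g X W = 0 := by
    rw [S.g_symm]
    exact RiemannianSetup.g_eq_zero_of_eigen_ne hA.1 hdist hX hW
  rw [S.g_nabla_left_eq_neg X Z Y (horth hY), S.g_nabla_left_eq_neg X Y Z (horth hZ), S.g_symm X,
    S.g_symm X, hA.g_nabla_comm hdist hX hY hZ]

/-- For a Codazzi tensor with exactly two distinct eigenfunctions `μ`, `λ`,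
`dim V_μ = 1` with unit section `X`: the tensor `(Y,Z) ↦ g(∇_Y X, Z)` is
symmetric on `V_λ × V_λ`, regardless of any trace condition. -/
theorem codazzi_nablaX_symm_on_Vlam
    {M VF : Type*} [AddCommGroup VF] [Module (M → ℝ) VF]
    (n : ℕ) (hn : 3 ≤ n)
    (S : RiemannianSetup M VF) (A : VF → VF) (hA : S.IsCodazzi A)
    (mu lam : M → ℝ) (hdist : ∀ p, mu p ≠ lam p)
    (X : VF) (hX : A X = mu • X) (hXunit : S.g X X = 1)
    (hdecomp : ∀ Z : VF, ∃ (c : M → ℝ) (Y : VF),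
      A Y = lam • Y ∧ Z = c • X + Y) :
    ∀ Y Z : VF, A Y = lam • Y → A Z = lam • Z →
      S.g (S.nabla Z X) Y = S.g (S.nabla Y X) Z :=
  codazzi_nablaX_symm_on_Vlam_general S A hA mu lam hdist X hX
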